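/- arXiv:2603.25914 — 3 statements merged into one kernel-verified Lean document; each statement's English description precedes it below -/
import Mathlib

section
/- For any random variables A, B, C, D, if the conditional mutual information I(B;D|AC) = 0, then I(A;B|C) ≥ I(A;B|CD). -/
open Finset Real Matrix
open scoped BigOperators Classical

noncomputable section

/-- Probability of an event under a finitely supported probability mass `p`. -/
def pr {Ω : Type*} [Fintype Ω] (p : Ω → ℝ) (E : Ω → Prop) : ℝ :=
  ∑ ω, if E ω then p ω else 0

/-- Distribution (pushforward pmf) of a random variable `A`. -/
def dst {Ω α : Type*} [Fintype Ω] (p : Ω → ℝ) (A : Ω → α) (a : α) : ℝ :=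
  pr p (fun ω => A ω = a)

/-- Shannon entropy (base 2). -/
def ent {Ω α : Type*} [Fintype Ω] [Fintype α] (p : Ω → ℝ) (A : Ω → α) : ℝ :=
  ∑ a, -(dst p A a * Real.logb 2 (dst p A a))

/-- Conditional entropy `H(A|B) = H(A,B) - H(B)`. -/
def condEnt {Ω α β : Type*} [Fintype Ω] [Fintype α] [Fintype β]
    (p : Ω → ℝ) (A : Ω → α) (B : Ω → β) : ℝ :=
  ent p (fun ω => (A ω, B ω)) - ent p B

/-- Conditional mutual information `I(A;B|C) = H(A|C) - H(A|B,C)`. -/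
def condMI {Ω α β γ : Type*} [Fintype Ω] [Fintype α] [Fintype β] [Fintype γ]
    (p : Ω → ℝ) (A : Ω → α) (B : Ω → β) (C : Ω → γ) : ℝ :=
  condEnt p A C - condEnt p A (fun ω => (B ω, C ω))

/-- Min-entropy `H∞(A) = -log₂ max_a Pr[A = a]`. -/
def minEnt {Ω α : Type*} [Fintype Ω] [Fintype α] [Nonempty α] (p : Ω → ℝ) (A : Ω → α) : ℝ :=
  -Real.logb 2 (Finset.univ.sup' Finset.univ_nonempty fun a => dst p A a)

/-- Rényi entropy of order 2: `H₂(A) = -log₂ ∑_a Pr[A=a]²`. -/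
def renyi2 {Ω α : Type*} [Fintype Ω] [Fintype α] (p : Ω → ℝ) (A : Ω → α) : ℝ :=
  -Real.logb 2 (∑ a, (dst p A a) ^ 2)

/-- Average min-entropy `H̃∞(A|B) = -log₂ E_{b∼B}[max_a Pr[A=a | B=b]]`. -/
def avgMinEnt {Ω α β : Type*} [Fintype Ω] [Fintype α] [Nonempty α] [Fintype β]
    (p : Ω → ℝ) (A : Ω → α) (B : Ω → β) : ℝ :=
  -Real.logb 2 (∑ b, dst p B b *
    (Finset.univ.sup' Finset.univ_nonempty fun a =>
      pr p (fun ω => A ω = a ∧ B ω = b) / dst p B b))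

open scoped BigOperators Classical

/-!
Expanding in joint entropies, `I(A;B|C) - I(A;B|C,D) = I(B;D|C) - I(B;D|A,C)`: both sides are
the interaction information of `A, B, D` given `C`, which is symmetric. Under the hypothesis the
right-hand side is `I(B;D|C) ≥ 0`. Nonnegativity of `I(X;Y|Z)` is Gibbs' inequality comparing the
joint law `q(x,y,z)` with `q(x,z) q(y,z) / q(z)`, a mass function of total mass one.
-/

lemma mul_log_div_le_sub {u v : ℝ} (hu : 0 ≤ u) (hv : 0 ≤ v) (huv : 0 < u → 0 < v) :
    u * log (v / u) ≤ v - u := by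
  rcases hu.eq_or_lt with rfl | hu
  · simpa using hv
  calc u * log (v / u) ≤ u * (v / u - 1) :=
        mul_le_mul_of_nonneg_left (log_le_sub_one_of_pos (div_pos (huv hu) hu)) hu.le
    _ = v - u := by field_simp

/-- Gibbs' inequality, for weights that need not be normalized. -/
lemma sum_mul_log_div_le {ι : Type*} [Fintype ι] {q v : ι → ℝ} (hq : ∀ i, 0 ≤ q i)
    (hv : ∀ i, 0 ≤ v i) (hqv : ∀ i, 0 < q i → 0 < v i) :
    ∑ i, q i * log (v i / q i) ≤ ∑ i, v i - ∑ i, q i := by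
  rw [← Finset.sum_sub_distrib]
  exact Finset.sum_le_sum fun i _ => mul_log_div_le_sub (hq i) (hv i) (hqv i)

section Distribution

variable {Ω : Type*} [Fintype Ω] (p : Ω → ℝ)

lemma sum_mul_comp_eq_sum_dst_mul {κ : Type*} [Fintype κ] (T : Ω → κ) (g : κ → ℝ) :
    ∑ ω, p ω * g (T ω) = ∑ k, dst p T k * g k := by
  simp only [dst, pr, Finset.sum_mul, ite_mul, zero_mul]
  rw [Finset.sum_comm]
  simp

lemma dst_nonneg (hp : ∀ ω, 0 ≤ p ω) {κ : Type*} (T : Ω → κ) (k : κ) : 0 ≤ dst p T k :=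
  Finset.sum_nonneg fun ω _ => by split_ifs <;> simp [hp ω]

lemma sum_dst (hp1 : ∑ ω, p ω = 1) {κ : Type*} [Fintype κ] (T : Ω → κ) :
    ∑ k, dst p T k = 1 := by
  simpa [hp1] using (sum_mul_comp_eq_sum_dst_mul p T fun _ => 1).symm

lemma dst_le_dst_comp (hp : ∀ ω, 0 ≤ p ω) {κ κ' : Type*} (T : Ω → κ) (f : κ → κ') (k : κ) :
    dst p T k ≤ dst p (fun ω => f (T ω)) (f k) :=
  Finset.sum_le_sum fun ω _ => by
    by_cases h : T ω = k
    · simp [h]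
    · rw [if_neg h]
      split_ifs <;> simp [hp ω]

lemma sum_dst_prod_left {κ κ' : Type*} [Fintype κ] (X : Ω → κ) (Z : Ω → κ') (c : κ') :
    ∑ a, dst p (fun ω => (X ω, Z ω)) (a, c) = dst p Z c := by
  simp only [dst, pr, Prod.mk.injEq]
  rw [Finset.sum_comm]
  refine Finset.sum_congr rfl fun ω _ => ?_
  by_cases h : Z ω = c <;> simp [h]

lemma ent_mul_log_two {κ : Type*} [Fintype κ] (T : Ω → κ) :
    ent p T * log 2 = -∑ ω, p ω * log (dst p T (T ω)) := by
  have hlog2 : log 2 ≠ 0 := (log_pos one_lt_two).ne'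
  rw [sum_mul_comp_eq_sum_dst_mul p T fun k => log (dst p T k)]
  simp only [ent, logb, Finset.sum_mul, ← Finset.sum_neg_distrib]
  refine Finset.sum_congr rfl fun k _ => ?_
  field_simp

lemma ent_eq_of_equiv {κ κ' : Type*} [Fintype κ] [Fintype κ'] (e : κ ≃ κ') {T : Ω → κ}
    {T' : Ω → κ'} (h : ∀ ω, T' ω = e (T ω)) : ent p T' = ent p T := by
  have hdst : ∀ k, dst p T' (e k) = dst p T k := fun k =>
    Finset.sum_congr rfl fun ω _ => by simp [h]
  exact Fintype.sum_equiv e.symm _ _ fun k' => by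
    rw [← hdst (e.symm k'), e.apply_symm_apply]

end Distribution

section ConditionalMutualInformation

variable {Ω α β γ : Type*} [Fintype Ω] [Fintype α] [Fintype β] [Fintype γ] (p : Ω → ℝ)

lemma condMI_mul_log_two (X : Ω → α) (Y : Ω → β) (Z : Ω → γ) :
    condMI p X Y Z * log 2 = ∑ ω, p ω *
      (log (dst p (fun ω => (X ω, Y ω, Z ω)) (X ω, Y ω, Z ω)) + log (dst p Z (Z ω))
        - log (dst p (fun ω => (X ω, Z ω)) (X ω, Z ω))
        - log (dst p (fun ω => (Y ω, Z ω)) (Y ω, Z ω))) := by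
  simp only [condMI, condEnt, sub_mul, ent_mul_log_two, mul_add, mul_sub,
    Finset.sum_add_distrib, Finset.sum_sub_distrib]
  ring

lemma sum_dst_mul_dst_div_dst (hp1 : ∑ ω, p ω = 1) (X : Ω → α) (Y : Ω → β) (Z : Ω → γ) :
    ∑ s : α × β × γ, dst p (fun ω => (X ω, Z ω)) (s.1, s.2.2) * dst p (fun ω => (Y ω, Z ω)) s.2
      / dst p Z s.2.2 = 1 :=
  calc _ = ∑ c, (∑ a, dst p (fun ω => (X ω, Z ω)) (a, c))
          * (∑ b, dst p (fun ω => (Y ω, Z ω)) (b, c)) / dst p Z c := by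
        simp only [Fintype.sum_prod_type, Finset.sum_mul, Finset.mul_sum, Finset.sum_div]
        exact ((Finset.sum_congr rfl fun _ _ => Finset.sum_comm).trans Finset.sum_comm).trans
          (Finset.sum_congr rfl fun _ _ => Finset.sum_comm)
    _ = ∑ c, dst p Z c := by simp only [sum_dst_prod_left, mul_self_div_self]
    _ = 1 := sum_dst p hp1 Z

lemma condMI_nonneg (hp : ∀ ω, 0 ≤ p ω) (hp1 : ∑ ω, p ω = 1)
    (X : Ω → α) (Y : Ω → β) (Z : Ω → γ) : 0 ≤ condMI p X Y Z := by
  set q := dst p (fun ω => (X ω, Y ω, Z ω))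
  set qXZ := dst p (fun ω => (X ω, Z ω))
  set qYZ := dst p (fun ω => (Y ω, Z ω))
  set qZ := dst p Z
  -- the joint law of `X, Y, Z` if `X` and `Y` were independent given `Z`
  set v : α × β × γ → ℝ := fun s => qXZ (s.1, s.2.2) * qYZ s.2 / qZ s.2.2
  have hv_nonneg : ∀ s, 0 ≤ v s := fun s =>
    div_nonneg (mul_nonneg (dst_nonneg p hp _ _) (dst_nonneg p hp _ _)) (dst_nonneg p hp _ _)
  have hmarg_pos : ∀ s, 0 < q s → 0 < qXZ (s.1, s.2.2) ∧ 0 < qYZ s.2 ∧ 0 < qZ s.2.2 :=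
    fun s hs =>
      ⟨hs.trans_le (dst_le_dst_comp p hp _ (fun s => (s.1, s.2.2)) s),
        hs.trans_le (dst_le_dst_comp p hp _ Prod.snd s),
        hs.trans_le (dst_le_dst_comp p hp _ (fun s => s.2.2) s)⟩
  have hv_pos : ∀ s, 0 < q s → 0 < v s := fun s hs => by
    obtain ⟨hXZ, hYZ, hZ⟩ := hmarg_pos s hs
    exact div_pos (mul_pos hXZ hYZ) hZ
  have hv_sum : ∑ s, v s = 1 := sum_dst_mul_dst_div_dst p hp1 X Y Z
  have hrepr : condMI p X Y Z * log 2 = -∑ s, q s * log (v s / q s) := by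
    rw [condMI_mul_log_two, sum_mul_comp_eq_sum_dst_mul p (fun ω => (X ω, Y ω, Z ω))
      (fun s => log (q s) + log (qZ s.2.2) - log (qXZ (s.1, s.2.2)) - log (qYZ s.2)),
      ← Finset.sum_neg_distrib]
    refine Finset.sum_congr rfl fun s _ => ?_
    rcases (dst_nonneg p hp _ s : 0 ≤ q s).eq_or_lt with hs | hs
    · simp [q, ← hs]
    obtain ⟨hXZ, hYZ, hZ⟩ := hmarg_pos s hs
    simp only [v, q]
    rw [log_div (hv_pos s hs).ne' hs.ne', log_div (mul_pos hXZ hYZ).ne' hZ.ne',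
      log_mul hXZ.ne' hYZ.ne']
    ring
  have hgibbs := sum_mul_log_div_le (dst_nonneg p hp _) hv_nonneg hv_pos
  rw [hv_sum, sum_dst p hp1] at hgibbs
  have hlog2 : 0 < log 2 := log_pos one_lt_two
  exact (mul_nonneg_iff_of_pos_right hlog2).mp (by linarith)

lemma condMI_sub_condMI_eq {δ : Type*} [Fintype δ]
    (X : Ω → α) (Y : Ω → β) (Z : Ω → γ) (W : Ω → δ) :
    condMI p X Y Z - condMI p X Y (fun ω => (Z ω, W ω))
      = condMI p Y W Z - condMI p Y W (fun ω => (X ω, Z ω)) := by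
  have e₁ : ent p (fun ω => (Y ω, W ω, Z ω)) = ent p (fun ω => (Y ω, Z ω, W ω)) :=
    ent_eq_of_equiv p ((Equiv.refl β).prodCongr (Equiv.prodComm γ δ)) fun _ => rfl
  have e₂ : ent p (fun ω => (W ω, Z ω)) = ent p (fun ω => (Z ω, W ω)) :=
    ent_eq_of_equiv p (Equiv.prodComm γ δ) fun _ => rfl
  have e₃ : ent p (fun ω => (Y ω, X ω, Z ω)) = ent p (fun ω => (X ω, Y ω, Z ω)) :=
    ent_eq_of_equiv p ⟨fun s => (s.2.1, s.1, s.2.2), fun s => (s.2.1, s.1, s.2.2),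
      fun _ => rfl, fun _ => rfl⟩ fun _ => rfl
  have e₄ : ent p (fun ω => (Y ω, W ω, X ω, Z ω)) = ent p (fun ω => (X ω, Y ω, Z ω, W ω)) :=
    ent_eq_of_equiv p ⟨fun s => (s.2.1, s.2.2.2, s.1, s.2.2.1),
      fun s => (s.2.2.1, s.1, s.2.2.2, s.2.1), fun _ => rfl, fun _ => rfl⟩ fun _ => rfl
  have e₅ : ent p (fun ω => (W ω, X ω, Z ω)) = ent p (fun ω => (X ω, Z ω, W ω)) :=
    ent_eq_of_equiv p ⟨fun s => (s.2.2, s.1, s.2.1), fun s => (s.2.1, s.2.2, s.1),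
      fun _ => rfl, fun _ => rfl⟩ fun _ => rfl
  simp only [condMI, condEnt, e₁, e₂, e₃, e₄, e₅]
  ring

end ConditionalMutualInformation

/-- If I(B;D|A,C) = 0 then I(A;B|C) ≥ I(A;B|C,D). -/
theorem stmt_1 {Ω α β γ δ : Type*} [Fintype Ω] [Fintype α] [Fintype β] [Fintype γ] [Fintype δ]
    (p : Ω → ℝ) (hp : ∀ ω, 0 ≤ p ω) (hp1 : ∑ ω, p ω = 1)
    (A : Ω → α) (B : Ω → β) (C : Ω → γ) (D : Ω → δ)
    (h : condMI p B D (fun ω => (A ω, C ω)) = 0) :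
    condMI p A B C ≥ condMI p A B (fun ω => (C ω, D ω)) := by
  have hBD := condMI_nonneg p hp hp1 B D C
  have hchain := condMI_sub_condMI_eq p A B C D
  linarith
end
end

section
/- Let D be a probability distribution and U the uniform distribution over a finite set S ⊆ {0,1}ⁿ. Suppose the KL divergence D(D ‖ U) < t for some t > 1. Then for every α > 2, there exists an event E with D(E) ≥ 1 - 1/α such that the conditioned distribution D|_E has min-entropy H∞(D|_E) ≥ log|S| - 2αt. -/
open Finset Real Matrix
open scoped BigOperators Classical

noncomputable section

/-- Tangent-line inequality for the convex function `x ↦ x * log x` at the point `c > 0`. -/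
lemma tangent_mul_log {m c : ℝ} (hm : 0 ≤ m) (hc : 0 < c) :
    c * Real.log c + (Real.log c + 1) * (m - c) ≤ m * Real.log m := by
  rcases hm.eq_or_lt with h | h
  · rw [← h]
    nlinarith [hc]
  · have h1 := Real.log_le_sub_one_of_pos (div_pos hc h)
    rw [Real.log_div hc.ne' h.ne'] at h1
    have h2 : m * (Real.log c - Real.log m) ≤ m * (c / m - 1) :=
      mul_le_mul_of_nonneg_left h1 h.le
    have h3 : m * (c / m) = c := by field_simp
    nlinarith [h2, h3]

set_option maxHeartbeats 1000000 in
/-- If D(𝒟 ‖ Uniform(S)) < t (t > 1), then for every α > 2 there is an event E with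
    𝒟(E) ≥ 1 - 1/α and H∞(𝒟|_E) ≥ log|S| - 2αt, i.e. every conditional probability
    is at most 2^{-(log|S| - 2αt)}. -/
theorem stmt_6 (n : ℕ) (S : Finset (Fin n → Bool)) (hS : S.Nonempty)
    (D : (Fin n → Bool) → ℝ) (hD0 : ∀ x, 0 ≤ D x) (hD1 : ∑ x ∈ S, D x = 1)
    (hsupp : ∀ x ∉ S, D x = 0)
    (t : ℝ) (ht : 1 < t)
    (hKL : ∑ x ∈ S, D x * Real.logb 2 (D x / ((S.card : ℝ)⁻¹)) < t)
    (al : ℝ) (hal : 2 < al) :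
    ∃ E : Finset (Fin n → Bool),
      1 - 1 / al ≤ ∑ x ∈ E, D x ∧
      ∀ x ∈ E, D x / (∑ y ∈ E, D y) ≤ (2 : ℝ) ^ (-(Real.logb 2 (S.card : ℝ) - 2 * al * t)) := by
  classical
  set K : ℝ := (S.card : ℝ) with hKdef
  have hK1 : (1:ℝ) ≤ K := by
    have h := Finset.card_pos.mpr hS
    rw [hKdef]
    exact_mod_cast h
  have hK0 : (0:ℝ) < K := by linarith
  have hL : (0:ℝ) < Real.log 2 := Real.log_pos (by norm_num)
  set L : ℝ := Real.log 2 with hLdef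
  have hal0 : (0:ℝ) < al := by linarith
  set m' : ℝ := 1 - 1 / al with hm'def
  have hm'half : (1:ℝ)/2 < m' := by
    have h12 : 1 / al < 1 / 2 := by
      rw [div_lt_div_iff₀ hal0 (by norm_num)]
      linarith
    rw [hm'def]; linarith
  have hm'0 : (0:ℝ) < m' := lt_trans (by norm_num) hm'half
  set θ : ℝ := (2:ℝ) ^ (2 * al * t) * m' with hθdef
  have hrpos : (0:ℝ) < (2:ℝ) ^ (2 * al * t) := Real.rpow_pos_of_pos (by norm_num) _
  have hθ0 : (0:ℝ) < θ := mul_pos hrpos hm'0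
  clear_value K L m' θ
  set E : Finset (Fin n → Bool) := S.filter (fun x => D x * K ≤ θ) with hEdef
  set Bs : Finset (Fin n → Bool) := S.filter (fun x => ¬ (D x * K ≤ θ)) with hBsdef
  have hsplitD : (∑ x ∈ E, D x) + (∑ x ∈ Bs, D x) = 1 := by
    rw [hEdef, hBsdef, Finset.sum_filter_add_sum_filter_not, hD1]
  have hm0 : (0:ℝ) ≤ ∑ x ∈ E, D x := Finset.sum_nonneg fun x _ => hD0 x
  -- KL sum in natural log
  have hSsum : ∑ x ∈ S, D x * Real.log (D x * K) < t * L := by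
    have h1 : ∀ x ∈ S, D x * Real.log (D x * K) = (D x * Real.logb 2 (D x / K⁻¹)) * L := by
      intro x _
      have hdi : D x / K⁻¹ = D x * K := by field_simp
      rw [hdi, Real.logb, hLdef]
      field_simp
    rw [Finset.sum_congr rfl h1, ← Finset.sum_mul]
    exact mul_lt_mul_of_pos_right hKL hL
  have hsplit2 : (∑ x ∈ E, D x * Real.log (D x * K)) + (∑ x ∈ Bs, D x * Real.log (D x * K))
      = ∑ x ∈ S, D x * Real.log (D x * K) := by
    rw [hEdef, hBsdef, Finset.sum_filter_add_sum_filter_not]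
  -- Markov bound on the bad set
  have hBbound : (∑ x ∈ Bs, D x) * Real.log θ ≤ ∑ x ∈ Bs, D x * Real.log (D x * K) := by
    rw [Finset.sum_mul]
    apply Finset.sum_le_sum
    intro x hx
    have hlt : θ < D x * K := lt_of_not_ge (Finset.mem_filter.mp hx).2
    exact mul_le_mul_of_nonneg_left (Real.log_le_log hθ0 hlt.le) (hD0 x)
  -- Gibbs (tangent line) bound on the good set
  have hEbound : (∑ x ∈ E, D x) * Real.log (∑ x ∈ E, D x)
      ≤ ∑ x ∈ E, D x * Real.log (D x * K) := by
    rcases hm0.eq_or_lt with hm00 | hmpos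
    · have hz : ∀ x ∈ E, D x = 0 :=
        (Finset.sum_eq_zero_iff_of_nonneg (fun x _ => hD0 x)).mp hm00.symm
      have hz2 : ∑ x ∈ E, D x * Real.log (D x * K) = 0 :=
        Finset.sum_eq_zero fun x hx => by rw [hz x hx]; ring
      rw [hz2, ← hm00]
      simp
    · set m : ℝ := ∑ x ∈ E, D x with hmdef
      have hpt : ∀ x ∈ E, m * Real.log m + (Real.log m + 1) * (D x * K - m)
          ≤ (D x * K) * Real.log (D x * K) := fun x _ =>
        tangent_mul_log (mul_nonneg (hD0 x) hK0.le) hmpos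
      have hsum := Finset.sum_le_sum hpt
      have hLHS : ∑ x ∈ E, (m * Real.log m + (Real.log m + 1) * (D x * K - m))
          = (E.card : ℝ) * (m * Real.log m)
            + (Real.log m + 1) * (m * K - (E.card : ℝ) * m) := by
        rw [Finset.sum_add_distrib, Finset.sum_const, nsmul_eq_mul, ← Finset.mul_sum]
        congr 2
        rw [Finset.sum_sub_distrib, ← Finset.sum_mul, Finset.sum_const, nsmul_eq_mul, ← hmdef]
      have hRHS : ∑ x ∈ E, (D x * K) * Real.log (D x * K)
          = K * ∑ x ∈ E, D x * Real.log (D x * K) := by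
        rw [Finset.mul_sum]
        exact Finset.sum_congr rfl fun x _ => by ring
      rw [hLHS, hRHS] at hsum
      have hcard : (E.card : ℝ) ≤ K := by
        have h := Finset.card_le_card (Finset.filter_subset (fun x => D x * K ≤ θ) S)
        rw [hKdef]
        exact_mod_cast h
      nlinarith [hsum, mul_nonneg (sub_nonneg.mpr hcard) hmpos.le, hK0,
        mul_pos hK0 hmpos]
  -- facts about θ
  have hlogθ : Real.log θ = 2 * al * t * L + Real.log m' := by
    rw [hθdef, Real.log_mul (ne_of_gt hrpos) hm'0.ne', Real.log_rpow (by norm_num), hLdef]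
  have hP : -L < Real.log m' := by
    have h := Real.log_lt_log (by norm_num : (0:ℝ) < 1/2) hm'half
    rwa [show Real.log ((1:ℝ)/2) = -L by rw [one_div, Real.log_inv, hLdef]] at h
  have hQm' : (2 * al * t * L) * (1 - m') = 2 * t * L := by
    rw [hm'def]
    field_simp
    ring
  have hQ1 : 1 < 2 * al * t * L := by
    have hL6 : (0.6931471803 : ℝ) < L := by rw [hLdef]; exact Real.log_two_gt_d9
    have h1 : (2:ℝ) < al * t := by nlinarith
    nlinarith [mul_pos (sub_pos.mpr h1) hL, hL6]
  -- main claim: the good set has mass at least m'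
  have hmain : m' ≤ ∑ x ∈ E, D x := by
    by_contra hcon
    push_neg at hcon
    have H : (1 - (∑ x ∈ E, D x)) * Real.log θ
        + (∑ x ∈ E, D x) * Real.log (∑ x ∈ E, D x) < t * L := by
      have hb' : ∑ x ∈ Bs, D x = 1 - ∑ x ∈ E, D x := by linarith
      rw [← hb']
      linarith [hBbound, hEbound, hsplit2, hSsum]
    rw [hlogθ] at H
    have htan := tangent_mul_log hm0 hm'0
    nlinarith [H, htan, hQm',
      mul_pos (sub_pos.mpr hcon) (sub_pos.mpr hQ1),
      hP, hL, mul_pos (sub_pos.mpr ht) hL]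
  refine ⟨E, hmain, fun x hx => ?_⟩
  have hxE : D x * K ≤ θ := (Finset.mem_filter.mp hx).2
  have hDx : D x ≤ θ / K := (le_div_iff₀ hK0).mpr hxE
  have hmsum : (0:ℝ) < ∑ y ∈ E, D y := lt_of_lt_of_le hm'0 hmain
  calc D x / (∑ y ∈ E, D y) ≤ (θ / K) / m' :=
        div_le_div₀ (by positivity) hDx hm'0 hmain
    _ = (2:ℝ) ^ (2 * al * t) / K := by
        rw [hθdef]
        field_simp
    _ = (2:ℝ) ^ (-(Real.logb 2 K - 2 * al * t)) := by
        rw [neg_sub, Real.rpow_sub (by norm_num : (0:ℝ) < 2),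
          Real.rpow_logb (by norm_num) (by norm_num) hK0]
end
end

section
/- Let X, Y be random variables over {0,1}ⁿ, and let Z = z be a fixed setting of a random process and A a random variable, where an output z_out ∈ {±1} is determined by A and z. Suppose (i) H̃∞(Y | A, Z=z) + H̃∞(X | A, Z=z) ≥ n + 2γ, and (ii) I(Y; X | A, Z=z) ≤ 2^{-2γ}, for some γ ≥ 3. Then E_{A|Z=z}[ |E[χ_Y(X) · z_out | A=a, Z=z]| ] < 2^{-γ+2}, where χ_Y(X) = (-1)^{⟨Y,X⟩} with the inner product over F₂. -/
/-!
Fix a value `a` of `A` and let `J_a` be the joint mass of `(Y, X)` on `{A = a}`, with marginals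
`P_a`, `Q_a` and total mass `w_a = Pr[A = a]`. As `z_out` is constant on `{A = a}`, the summand for
`a` is at most `|∑ χ_y(x) J_a(y, x)|`. Split `J_a` into the product `P_a ⊗ Q_a / w_a` of its marginals
plus a remainder. Lindsey's lemma bounds the product part by `√(2ⁿ · max P_a · max Q_a)`, and by
Cauchy–Schwarz these sum to at most `√(2ⁿ 2^{-H̃∞(Y|A)} 2^{-H̃∞(X|A)}) ≤ 2^{-γ}`. The remainder is
at most its ℓ₁ norm, which a Pinsker-type inequality (through the Hellinger distance) bounds by
`2 √(w_a D_a)`, where `∑ₐ D_a = ln 2 · I(Y; X | A)`; Cauchy–Schwarz again gives at most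
`2 √(ln 2) 2^{-γ}`. Finally `1 + 2 √(ln 2) < 4`.
-/

open Finset Real Matrix
open scoped BigOperators Classical

noncomputable section

/-- The Fourier character χ_y(x) = (-1)^{⟨y,x⟩ mod 2}. -/
def chi {n : ℕ} (y x : Fin n → Bool) : ℝ :=
  (-1 : ℝ) ^ (Finset.univ.filter fun i => y i ∧ x i).card

lemma chi_eq_prod {n : ℕ} (y x : Fin n → Bool) :
    chi y x = ∏ i, if y i ∧ x i then (-1 : ℝ) else 1 := by
  rw [prod_ite, prod_const, prod_const, one_pow, mul_one, chi]

lemma abs_chi {n : ℕ} (y x : Fin n → Bool) : |chi y x| = 1 := by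
  rw [chi, abs_pow, abs_neg, abs_one, one_pow]

lemma sum_chi_mul_chi {n : ℕ} (x x' : Fin n → Bool) :
    ∑ y, chi y x * chi y x' = if x = x' then (2 : ℝ) ^ n else 0 := by
  have hfactor : ∑ y, chi y x * chi y x' = ∏ i, ∑ b : Bool,
      (if b ∧ x i then (-1 : ℝ) else 1) * (if b ∧ x' i then -1 else 1) := by
    rw [Fintype.prod_sum]
    simp only [chi_eq_prod, ← prod_mul_distrib]
  have hcoord : ∀ i, ∑ b : Bool, (if b ∧ x i then (-1 : ℝ) else 1) *
      (if b ∧ x' i then -1 else 1) = if x i = x' i then 2 else 0 := by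
    intro i
    cases x i <;> cases x' i <;> norm_num
  rw [hfactor, prod_congr rfl fun i _ => hcoord i]
  split_ifs with h
  · simp [h]
  · obtain ⟨i, hi⟩ := Function.ne_iff.1 h
    exact prod_eq_zero (mem_univ i) (if_neg hi)

lemma sum_sq_sum_chi_mul {n : ℕ} (Q : (Fin n → Bool) → ℝ) :
    ∑ y, (∑ x, chi y x * Q x) ^ 2 = 2 ^ n * ∑ x, Q x ^ 2 := by
  calc ∑ y, (∑ x, chi y x * Q x) ^ 2
      = ∑ x, ∑ x', (∑ y, chi y x * chi y x') * (Q x * Q x') := by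
        simp only [sq, sum_mul_sum]
        simp only [sum_mul]
        rw [sum_comm]
        refine sum_congr rfl fun x _ => ?_
        rw [sum_comm]
        exact sum_congr rfl fun x' _ => sum_congr rfl fun y _ => by ring
    _ = 2 ^ n * ∑ x, Q x ^ 2 := by
        simp [sum_chi_mul_chi, ite_mul, mul_sum, sq]

lemma sq_sum_chi_mul_mul_le {n : ℕ} (P Q : (Fin n → Bool) → ℝ) :
    (∑ y, ∑ x, chi y x * P y * Q x) ^ 2 ≤ 2 ^ n * ((∑ y, P y ^ 2) * ∑ x, Q x ^ 2) := by
  calc (∑ y, ∑ x, chi y x * P y * Q x) ^ 2 = (∑ y, P y * ∑ x, chi y x * Q x) ^ 2 := by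
        simp only [mul_sum]
        congr! 3 with y _ x
        ring
    _ ≤ (∑ y, P y ^ 2) * ∑ y, (∑ x, chi y x * Q x) ^ 2 := sum_mul_sq_le_sq_mul_sq _ _ _
    _ = 2 ^ n * ((∑ y, P y ^ 2) * ∑ x, Q x ^ 2) := by rw [sum_sq_sum_chi_mul]; ring

lemma sq_sqrt_sub_sqrt_le {x y : ℝ} (hx : 0 ≤ x) (hy : 0 ≤ y) (hxy : y = 0 → x = 0) :
    (√x - √y) ^ 2 ≤ x * log (x / y) - x + y := by
  rcases hx.eq_or_lt with rfl | hx
  · simp [sq_sqrt hy]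
  have hy : 0 < y := hy.lt_of_ne fun h => hx.ne' (hxy h.symm)
  have ha : 0 < √x := sqrt_pos.2 hx
  have hb : 0 < √y := sqrt_pos.2 hy
  -- `log (x / y) = 2 log (√x / √y) ≥ 2 (1 - √y / √x)`
  have hlog : 2 * (1 - √y / √x) ≤ log (x / y) := by
    have h := one_sub_inv_le_log_of_pos (div_pos ha hb)
    rw [inv_div] at h
    rw [← sq_sqrt hx.le, ← sq_sqrt hy.le, ← div_pow, log_pow, sqrt_sq ha.le, sqrt_sq hb.le]
    push_cast
    linarith
  have hmul : x * (2 * (1 - √y / √x)) = 2 * x - 2 * (√x * √y) := by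
    calc x * (2 * (1 - √y / √x)) = 2 * x - 2 * (x / √x * √y) := by ring
      _ = 2 * x - 2 * (√x * √y) := by rw [div_sqrt]
  have := mul_le_mul_of_nonneg_left hlog hx.le
  nlinarith [sq_sqrt hx.le, sq_sqrt hy.le]

section Divergence

variable {ι : Type*} [Fintype ι] {u v : ι → ℝ}

lemma sum_sq_sqrt_sub_sqrt_le (hu : ∀ i, 0 ≤ u i) (hv : ∀ i, 0 ≤ v i)
    (huv : ∀ i, v i = 0 → u i = 0) (hsum : ∑ i, u i = ∑ i, v i) :
    ∑ i, (√(u i) - √(v i)) ^ 2 ≤ ∑ i, u i * log (u i / v i) := by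
  calc ∑ i, (√(u i) - √(v i)) ^ 2 ≤ ∑ i, (u i * log (u i / v i) - u i + v i) :=
        sum_le_sum fun i _ => sq_sqrt_sub_sqrt_le (hu i) (hv i) (huv i)
    _ = ∑ i, u i * log (u i / v i) := by
        rw [sum_add_distrib, sum_sub_distrib, hsum, sub_add_cancel]

lemma sum_mul_log_div_nonneg (hu : ∀ i, 0 ≤ u i) (hv : ∀ i, 0 ≤ v i)
    (huv : ∀ i, v i = 0 → u i = 0) (hsum : ∑ i, u i = ∑ i, v i) :
    0 ≤ ∑ i, u i * log (u i / v i) :=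
  (sum_nonneg fun _ _ => sq_nonneg _).trans (sum_sq_sqrt_sub_sqrt_le hu hv huv hsum)

lemma sq_sum_abs_sub_le (hu : ∀ i, 0 ≤ u i) (hv : ∀ i, 0 ≤ v i)
    (huv : ∀ i, v i = 0 → u i = 0) (hsum : ∑ i, u i = ∑ i, v i) :
    (∑ i, |u i - v i|) ^ 2 ≤ 4 * (∑ i, u i) * ∑ i, u i * log (u i / v i) := by
  have hfactor : ∀ i, |u i - v i| = |√(u i) - √(v i)| * (√(u i) + √(v i)) := by
    intro i
    have h : u i - v i = (√(u i) - √(v i)) * (√(u i) + √(v i)) := by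
      nlinarith [sq_sqrt (hu i), sq_sqrt (hv i)]
    rw [h, abs_mul, abs_of_nonneg (by positivity : 0 ≤ √(u i) + √(v i))]
  have hplus : ∑ i, (√(u i) + √(v i)) ^ 2 ≤ 4 * ∑ i, u i := by
    calc ∑ i, (√(u i) + √(v i)) ^ 2 ≤ ∑ i, 2 * (u i + v i) :=
          sum_le_sum fun i _ => by
            nlinarith [sq_sqrt (hu i), sq_sqrt (hv i), sq_nonneg (√(u i) - √(v i))]
      _ = 4 * ∑ i, u i := by rw [← mul_sum, sum_add_distrib, ← hsum]; ring
  calc (∑ i, |u i - v i|) ^ 2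
      = (∑ i, |√(u i) - √(v i)| * (√(u i) + √(v i))) ^ 2 := by simp only [hfactor]
    _ ≤ (∑ i, |√(u i) - √(v i)| ^ 2) * ∑ i, (√(u i) + √(v i)) ^ 2 :=
        sum_mul_sq_le_sq_mul_sq _ _ _
    _ ≤ (∑ i, u i * log (u i / v i)) * (4 * ∑ i, u i) := by
        simp only [sq_abs]
        exact mul_le_mul (sum_sq_sqrt_sub_sqrt_le hu hv huv hsum) hplus
          (sum_nonneg fun i _ => sq_nonneg _) (sum_mul_log_div_nonneg hu hv huv hsum)
    _ = 4 * (∑ i, u i) * ∑ i, u i * log (u i / v i) := by ring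

end Divergence

structure HasMarginals {β γ : Type*} [Fintype β] [Fintype γ]
    (J : β → γ → ℝ) (P : β → ℝ) (Q : γ → ℝ) (w : ℝ) : Prop where
  nonneg : ∀ y x, 0 ≤ J y x
  sum_right : ∀ y, ∑ x, J y x = P y
  sum_left : ∀ x, ∑ y, J y x = Q x
  sum_total : ∑ y, P y = w

/-- `w` times the mutual information, in nats, of the probability distribution `J / w` on `β × γ`
(whose marginals are `P / w` and `Q / w`). -/
def mutualInfoMass {β γ : Type*} [Fintype β] [Fintype γ]
    (J : β → γ → ℝ) (P : β → ℝ) (Q : γ → ℝ) (w : ℝ) : ℝ :=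
  ∑ y, ∑ x, J y x * log (J y x * w / (P y * Q x))

lemma mutualInfoMass_eq_sum_prod {β γ : Type*} [Fintype β] [Fintype γ]
    (J : β → γ → ℝ) (P : β → ℝ) (Q : γ → ℝ) (w : ℝ) :
    mutualInfoMass J P Q w = ∑ t : β × γ, J t.1 t.2 * log (J t.1 t.2 / (P t.1 * Q t.2 / w)) := by
  simp only [div_div_eq_mul_div, Fintype.sum_prod_type, mutualInfoMass]

namespace HasMarginals

variable {β γ : Type*} [Fintype β] [Fintype γ] {J : β → γ → ℝ} {P : β → ℝ} {Q : γ → ℝ} {w : ℝ}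

lemma le_left (h : HasMarginals J P Q w) (y : β) (x : γ) : J y x ≤ P y :=
  h.sum_right y ▸ single_le_sum (fun x' _ => h.nonneg y x') (mem_univ x)

lemma le_right (h : HasMarginals J P Q w) (y : β) (x : γ) : J y x ≤ Q x :=
  h.sum_left x ▸ single_le_sum (fun y' _ => h.nonneg y' x) (mem_univ y)

lemma left_nonneg (h : HasMarginals J P Q w) (y : β) : 0 ≤ P y :=
  h.sum_right y ▸ sum_nonneg fun x _ => h.nonneg y x

lemma right_nonneg (h : HasMarginals J P Q w) (x : γ) : 0 ≤ Q x :=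
  h.sum_left x ▸ sum_nonneg fun y _ => h.nonneg y x

lemma total_nonneg (h : HasMarginals J P Q w) : 0 ≤ w :=
  h.sum_total ▸ sum_nonneg fun y _ => h.left_nonneg y

lemma sum_right_total (h : HasMarginals J P Q w) : ∑ x, Q x = w := by
  simp only [← h.sum_left, ← h.sum_total, ← h.sum_right]
  exact sum_comm

lemma le_total (h : HasMarginals J P Q w) (y : β) : P y ≤ w :=
  h.sum_total ▸ single_le_sum (fun y' _ => h.left_nonneg y') (mem_univ y)

lemma sum_mul_div_total (h : HasMarginals J P Q w) : ∑ y, ∑ x, P y * Q x / w = w := by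
  simp only [← sum_div, ← mul_sum, ← sum_mul, h.sum_total, h.sum_right_total, mul_self_div_self]

lemma eq_zero_of_mul_div_eq_zero (h : HasMarginals J P Q w) {y : β} {x : γ}
    (hyx : P y * Q x / w = 0) : J y x = 0 := by
  refine le_antisymm ?_ (h.nonneg y x)
  rcases div_eq_zero_iff.1 hyx with hPQ | hw
  · rcases mul_eq_zero.1 hPQ with hP | hQ
    · exact hP ▸ h.le_left y x
    · exact hQ ▸ h.le_right y x
  · exact hw ▸ (h.le_left y x).trans (h.le_total y)

lemma sum_prod_eq_sum_prod_mul_div (h : HasMarginals J P Q w) :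
    ∑ t : β × γ, J t.1 t.2 = ∑ t : β × γ, P t.1 * Q t.2 / w := by
  simp only [Fintype.sum_prod_type, h.sum_mul_div_total, h.sum_right, h.sum_total]

lemma mutualInfoMass_nonneg (h : HasMarginals J P Q w) : 0 ≤ mutualInfoMass J P Q w := by
  rw [mutualInfoMass_eq_sum_prod]
  exact sum_mul_log_div_nonneg (fun t => h.nonneg t.1 t.2)
    (fun t => div_nonneg (mul_nonneg (h.left_nonneg t.1) (h.right_nonneg t.2)) h.total_nonneg)
    (fun _ => h.eq_zero_of_mul_div_eq_zero) h.sum_prod_eq_sum_prod_mul_div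

lemma sum_abs_sub_mul_div_le (h : HasMarginals J P Q w) :
    ∑ y, ∑ x, |J y x - P y * Q x / w| ≤ 2 * √(w * mutualInfoMass J P Q w) := by
  have hsq := sq_sum_abs_sub_le (u := fun t : β × γ => J t.1 t.2)
    (v := fun t => P t.1 * Q t.2 / w) (fun t => h.nonneg t.1 t.2)
    (fun t => div_nonneg (mul_nonneg (h.left_nonneg t.1) (h.right_nonneg t.2)) h.total_nonneg)
    (fun _ => h.eq_zero_of_mul_div_eq_zero) h.sum_prod_eq_sum_prod_mul_div
  rw [← mutualInfoMass_eq_sum_prod] at hsq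
  simp only [Fintype.sum_prod_type, h.sum_right, h.sum_total] at hsq
  rw [← sqrt_sq (by positivity : (0 : ℝ) ≤ 2), ← sqrt_mul (by positivity)]
  exact le_sqrt_of_sq_le (by linarith)

end HasMarginals

lemma sum_sq_le_sup'_mul_sum {β : Type*} [Fintype β] [Nonempty β] {f : β → ℝ}
    (hf : ∀ b, 0 ≤ f b) : ∑ b, f b ^ 2 ≤ univ.sup' univ_nonempty f * ∑ b, f b := by
  rw [mul_sum]
  exact sum_le_sum fun b _ => by
    rw [sq]
    exact mul_le_mul_of_nonneg_right (le_sup' f (mem_univ b)) (hf b)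

lemma HasMarginals.abs_sum_chi_mul_le {n : ℕ} {J : (Fin n → Bool) → (Fin n → Bool) → ℝ}
    {P Q : (Fin n → Bool) → ℝ} {w : ℝ} (h : HasMarginals J P Q w) :
    |∑ y, ∑ x, chi y x * J y x| ≤ √(2 ^ n * (univ.sup' univ_nonempty P * univ.sup' univ_nonempty Q))
      + 2 * √(w * mutualInfoMass J P Q w) := by
  set M := 2 ^ n * (univ.sup' univ_nonempty P * univ.sup' univ_nonempty Q)
  -- No case split on `w = 0` is needed: then `J = 0`, and `P ⊗ Q / w = 0` since `x / 0 = 0`.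
  have hsplit : ∑ y, ∑ x, chi y x * J y x = ∑ y, ∑ x, chi y x * (J y x - P y * Q x / w)
      + (∑ y, ∑ x, chi y x * P y * Q x) / w := by
    simp only [sum_div, ← sum_add_distrib]
    exact sum_congr rfl fun y _ => sum_congr rfl fun x _ => by ring
  have hdiff : |∑ y, ∑ x, chi y x * (J y x - P y * Q x / w)|
      ≤ ∑ y, ∑ x, |J y x - P y * Q x / w| := by
    refine (abs_sum_le_sum_abs _ _).trans (sum_le_sum fun y _ => ?_)
    refine (abs_sum_le_sum_abs _ _).trans (le_of_eq (sum_congr rfl fun x _ => ?_))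
    rw [abs_mul, abs_chi, one_mul]
  have hprod : |∑ y, ∑ x, chi y x * P y * Q x| ≤ w * √M := by
    have hP := sum_sq_le_sup'_mul_sum h.left_nonneg
    have hQ := sum_sq_le_sup'_mul_sum h.right_nonneg
    rw [h.sum_total] at hP
    rw [h.sum_right_total] at hQ
    rw [← sqrt_sq h.total_nonneg, ← sqrt_mul (sq_nonneg w), ← sqrt_sq_eq_abs]
    refine sqrt_le_sqrt ((sq_sum_chi_mul_mul_le P Q).trans ?_)
    calc 2 ^ n * ((∑ y, P y ^ 2) * ∑ x, Q x ^ 2)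
        ≤ 2 ^ n * ((univ.sup' univ_nonempty P * w) * (univ.sup' univ_nonempty Q * w)) := by
          gcongr
          exact (sum_nonneg fun _ _ => sq_nonneg _).trans hP
      _ = w ^ 2 * M := by ring
  calc |∑ y, ∑ x, chi y x * J y x|
      ≤ |∑ y, ∑ x, chi y x * (J y x - P y * Q x / w)|
        + |(∑ y, ∑ x, chi y x * P y * Q x) / w| := hsplit ▸ abs_add_le _ _
    _ ≤ 2 * √(w * mutualInfoMass J P Q w) + √M := by
        gcongr
        · exact hdiff.trans h.sum_abs_sub_mul_div_le
        · rw [abs_div, abs_of_nonneg h.total_nonneg]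
          exact div_le_of_le_mul₀ h.total_nonneg (sqrt_nonneg _) (by linarith)
    _ = √M + 2 * √(w * mutualInfoMass J P Q w) := add_comm _ _

lemma mul_le_rpow_of_le_neg_logb_add_neg_logb {x y t : ℝ} (hx : 0 ≤ x) (hy : 0 ≤ y)
    (h : t ≤ -logb 2 x + -logb 2 y) : x * y ≤ 2 ^ (-t) := by
  rcases (mul_nonneg hx hy).eq_or_lt with h0 | hpos
  · rw [← h0]
    positivity
  rw [← logb_le_iff_le_rpow one_lt_two hpos, logb_mul (left_ne_zero_of_mul hpos.ne')
    (right_ne_zero_of_mul hpos.ne')]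
  linarith

lemma mul_abs_div_le_abs (w T : ℝ) : w * |T / w| ≤ |T| := by
  rw [abs_div, mul_div_left_comm]
  rcases eq_or_ne w 0 with rfl | hw
  · simp
  · exact mul_le_of_le_one_right (abs_nonneg T) ((div_le_one (abs_pos.2 hw)).2 (le_abs_self w))

lemma sum_sqrt_add_two_mul_sqrt_lt {α : Type*} [Fintype α] {c ε : ℝ} (hc : 0 ≤ c) (hε : 0 < ε)
    {mY mX w D : α → ℝ} (hmY : ∀ a, 0 ≤ mY a) (hmX : ∀ a, 0 ≤ mX a) (hw : ∀ a, 0 ≤ w a)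
    (hD : ∀ a, 0 ≤ D a) (hm : c * ((∑ a, mY a) * ∑ a, mX a) ≤ ε ^ 2) (hw1 : ∑ a, w a = 1)
    (hD1 : ∑ a, D a ≤ log 2 * ε ^ 2) :
    ∑ a, (√(c * (mY a * mX a)) + 2 * √(w a * D a)) < 4 * ε := by
  have hfirst : ∑ a, √(c * (mY a * mX a)) ≤ ε := by
    calc ∑ a, √(c * (mY a * mX a)) = √c * ∑ a, √(mY a) * √(mX a) := by
          simp only [mul_sum, sqrt_mul hc, sqrt_mul (hmY _)]
      _ ≤ √c * (√(∑ a, mY a) * √(∑ a, mX a)) := by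
          gcongr
          exact sum_sqrt_mul_sqrt_le _ hmY hmX
      _ = √(c * ((∑ a, mY a) * ∑ a, mX a)) := by
          rw [sqrt_mul hc, sqrt_mul (sum_nonneg fun a _ => hmY a)]
      _ ≤ ε := (sqrt_le_sqrt hm).trans_eq (sqrt_sq hε.le)
  have hsecond : ∑ a, √(w a * D a) ≤ √(log 2) * ε := by
    calc ∑ a, √(w a * D a) = ∑ a, √(w a) * √(D a) := by simp only [sqrt_mul (hw _)]
      _ ≤ √(∑ a, w a) * √(∑ a, D a) := sum_sqrt_mul_sqrt_le _ hw hD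
      _ ≤ √(log 2 * ε ^ 2) := by rw [hw1, sqrt_one, one_mul]; exact sqrt_le_sqrt hD1
      _ = √(log 2) * ε := by rw [sqrt_mul (log_nonneg one_le_two), sqrt_sq hε.le]
  have hlog : √(log 2) < 1 := (sqrt_lt' one_pos).2 (by linarith [log_two_lt_d9])
  rw [sum_add_distrib, ← mul_sum]
  nlinarith

section Distribution

variable {Ω β γ δ : Type*} [Fintype Ω] {p : Ω → ℝ}

lemma pr_nonneg (hp : ∀ ω, 0 ≤ p ω) (E : Ω → Prop) : 0 ≤ pr p E :=
  sum_nonneg fun ω _ => by split_ifs <;> simp [hp ω]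

lemma dst_nonneg_s9 (hp : ∀ ω, 0 ≤ p ω) (F : Ω → β) (b : β) : 0 ≤ dst p F b :=
  pr_nonneg hp _

lemma sum_pr_and [Fintype β] (F : Ω → β) (E : Ω → Prop) :
    ∑ b, pr p (fun ω => F ω = b ∧ E ω) = pr p E := by
  unfold pr
  rw [sum_comm]
  refine sum_congr rfl fun ω _ => ?_
  by_cases hE : E ω <;> simp [hE]

lemma sum_dst_mul [Fintype β] (F : Ω → β) (f : β → ℝ) :
    ∑ b, dst p F b * f b = ∑ ω, p ω * f (F ω) := by
  simp only [dst, pr, sum_mul, ite_mul, zero_mul]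
  rw [sum_comm]
  simp

lemma sum_dst_mul_logb_dst_comp [Fintype β] [Fintype γ] (F : Ω → β) (g : β → γ) :
    ∑ b, dst p F b * logb 2 (dst p (fun ω => g (F ω)) (g b)) = -ent p (fun ω => g (F ω)) := by
  rw [sum_dst_mul F (fun b => logb 2 (dst p (fun ω => g (F ω)) (g b))),
    ← sum_dst_mul (fun ω => g (F ω)) (fun c => logb 2 (dst p (fun ω => g (F ω)) c))]
  simp only [ent, sum_neg_distrib, neg_neg]

lemma hasMarginals_dst [Fintype β] [Fintype γ] (hp : ∀ ω, 0 ≤ p ω)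
    (U : Ω → β) (V : Ω → γ) (C : Ω → δ) (c : δ) :
    HasMarginals (fun u v => dst p (fun ω => (U ω, V ω, C ω)) (u, v, c))
      (fun u => dst p (fun ω => (U ω, C ω)) (u, c)) (fun v => dst p (fun ω => (V ω, C ω)) (v, c))
      (dst p C c) where
  nonneg _ _ := dst_nonneg_s9 hp _ _
  sum_right u := by
    simp only [dst, Prod.mk.injEq]
    rw [← sum_pr_and V]
    simp only [and_left_comm]
  sum_left v := by
    simp only [dst, Prod.mk.injEq]
    rw [← sum_pr_and U]
  sum_total := by
    simp only [dst, Prod.mk.injEq]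
    rw [← sum_pr_and U]

lemma condMI_eq_sum_mul_logb [Fintype β] [Fintype γ] [Fintype δ] (hp : ∀ ω, 0 ≤ p ω)
    (U : Ω → β) (V : Ω → γ) (C : Ω → δ) :
    condMI p U V C = ∑ t : β × γ × δ, dst p (fun ω => (U ω, V ω, C ω)) t *
      logb 2 (dst p (fun ω => (U ω, V ω, C ω)) t * dst p C t.2.2 /
        (dst p (fun ω => (U ω, C ω)) (t.1, t.2.2) *
          dst p (fun ω => (V ω, C ω)) (t.2.1, t.2.2))) := by
  set F := fun ω => (U ω, V ω, C ω)
  have hlogb : ∀ t : β × γ × δ, dst p F t * logb 2 (dst p F t * dst p C t.2.2 /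
      (dst p (fun ω => (U ω, C ω)) (t.1, t.2.2) * dst p (fun ω => (V ω, C ω)) (t.2.1, t.2.2))) =
      dst p F t * logb 2 (dst p F t) + dst p F t * logb 2 (dst p C t.2.2)
        - dst p F t * logb 2 (dst p (fun ω => (U ω, C ω)) (t.1, t.2.2))
        - dst p F t * logb 2 (dst p (fun ω => (V ω, C ω)) (t.2.1, t.2.2)) := by
    rintro ⟨u, v, c⟩
    have h := hasMarginals_dst hp U V C c
    rcases (h.nonneg u v).eq_or_lt with hJ | hJ
    · simp [F, ← hJ]
    have hP := hJ.trans_le (h.le_left u v)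
    have hQ := hJ.trans_le (h.le_right u v)
    have hw := hP.trans_le (h.le_total u)
    rw [logb_div (mul_pos hJ hw).ne' (mul_pos hP hQ).ne', logb_mul hJ.ne' hw.ne',
      logb_mul hP.ne' hQ.ne']
    ring
  have hJ : ∑ t, dst p F t * logb 2 (dst p F t) = -ent p F := sum_dst_mul_logb_dst_comp F id
  have hC : ∑ t, dst p F t * logb 2 (dst p C t.2.2) = -ent p C :=
    sum_dst_mul_logb_dst_comp F (fun t => t.2.2)
  have hUC : ∑ t, dst p F t * logb 2 (dst p (fun ω => (U ω, C ω)) (t.1, t.2.2)) =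
      -ent p (fun ω => (U ω, C ω)) := sum_dst_mul_logb_dst_comp F (fun t => (t.1, t.2.2))
  have hVC : ∑ t, dst p F t * logb 2 (dst p (fun ω => (V ω, C ω)) (t.2.1, t.2.2)) =
      -ent p (fun ω => (V ω, C ω)) := sum_dst_mul_logb_dst_comp F (fun t => (t.2.1, t.2.2))
  rw [sum_congr rfl fun t _ => hlogb t, sum_sub_distrib, sum_sub_distrib, sum_add_distrib,
    hJ, hC, hUC, hVC]
  simp only [condMI, condEnt, F]
  ring

lemma log_two_mul_condMI [Fintype β] [Fintype γ] [Fintype δ] (hp : ∀ ω, 0 ≤ p ω)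
    (U : Ω → β) (V : Ω → γ) (C : Ω → δ) :
    log 2 * condMI p U V C = ∑ c, mutualInfoMass
      (fun u v => dst p (fun ω => (U ω, V ω, C ω)) (u, v, c))
      (fun u => dst p (fun ω => (U ω, C ω)) (u, c)) (fun v => dst p (fun ω => (V ω, C ω)) (v, c))
      (dst p C c) := by
  rw [condMI_eq_sum_mul_logb hp, mul_sum]
  have hlog2 : ∀ a b : ℝ, log 2 * (a * (b / log 2)) = a * b := fun a b => by
    field_simp [(log_pos one_lt_two).ne']
  simp only [mutualInfoMass, Fintype.sum_prod_type, logb, hlog2]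
  exact (sum_congr rfl fun _ _ => sum_comm).trans sum_comm

lemma sum_ite_mul_eq_sum_mul_dst [Fintype β] [Fintype γ] [Fintype δ]
    (U : Ω → β) (V : Ω → γ) (C : Ω → δ) (c : δ) (f : β → γ → ℝ) :
    (∑ ω, if C ω = c then p ω * f (U ω) (V ω) else 0) =
      ∑ u, ∑ v, f u v * dst p (fun ω => (U ω, V ω, C ω)) (u, v, c) := by
  have h := sum_dst_mul (p := p) (fun ω => (U ω, V ω, C ω))
    (fun t => if t.2.2 = c then f t.1 t.2.1 else 0)
  simp only [Fintype.sum_prod_type, mul_ite, mul_zero, sum_ite_eq'] at h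
  simp only [← h, mem_univ, if_true, mul_comm]

lemma avgMinEnt_eq [Fintype β] [Nonempty β] [Fintype γ] (hp : ∀ ω, 0 ≤ p ω)
    (X : Ω → β) (A : Ω → γ) :
    avgMinEnt p X A =
      -logb 2 (∑ a, univ.sup' univ_nonempty fun x => dst p (fun ω => (X ω, A ω)) (x, a)) := by
  unfold avgMinEnt
  congr 2
  refine sum_congr rfl fun a _ => ?_
  rw [mul₀_sup' (dst_nonneg_s9 hp A a)]
  refine sup'_congr _ rfl fun x _ => ?_
  have hle : pr p (fun ω => X ω = x ∧ A ω = a) ≤ dst p A a := by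
    rw [dst, ← sum_pr_and X (fun ω => A ω = a)]
    exact single_le_sum (f := fun x => pr p (fun ω => X ω = x ∧ A ω = a))
      (fun _ _ => pr_nonneg hp _) (mem_univ x)
  rw [mul_div_cancel_of_imp' fun h => le_antisymm (h ▸ hle) (pr_nonneg hp _)]
  simp only [dst, Prod.mk.injEq]

lemma sum_dst_eq_one [Fintype β] (hp1 : ∑ ω, p ω = 1) (F : Ω → β) : ∑ b, dst p F b = 1 := by
  simpa [hp1] using sum_dst_mul (p := p) F (fun _ => 1)

lemma sup'_dst_nonneg [Fintype β] [Nonempty β] (hp : ∀ ω, 0 ≤ p ω) (G : Ω → γ) (f : β → γ) :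
    0 ≤ univ.sup' univ_nonempty fun b => dst p G (f b) :=
  le_sup'_of_le _ (mem_univ (Classical.arbitrary β)) (dst_nonneg_s9 hp _ _)

lemma two_pow_mul_sum_sup'_mul_sum_sup'_le [Fintype β] [Nonempty β] [Fintype γ]
    (hp : ∀ ω, 0 ≤ p ω) (Y X : Ω → β) (A : Ω → γ) (n : ℕ) (ga : ℝ)
    (hmin : avgMinEnt p Y A + avgMinEnt p X A ≥ n + 2 * ga) :
    2 ^ n * ((∑ a, univ.sup' univ_nonempty fun y => dst p (fun ω => (Y ω, A ω)) (y, a)) *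
      ∑ a, univ.sup' univ_nonempty fun x => dst p (fun ω => (X ω, A ω)) (x, a)) ≤
      (2 ^ (-ga)) ^ 2 := by
  rw [avgMinEnt_eq hp, avgMinEnt_eq hp] at hmin
  calc _ ≤ (2 : ℝ) ^ n * 2 ^ (-(n + 2 * ga)) := by
        refine mul_le_mul_of_nonneg_left (mul_le_rpow_of_le_neg_logb_add_neg_logb
          (sum_nonneg fun a _ => sup'_dst_nonneg hp _ fun y => (y, a))
          (sum_nonneg fun a _ => sup'_dst_nonneg hp _ fun x => (x, a)) hmin) (by positivity)
    _ = (2 ^ (-ga)) ^ 2 := by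
        rw [← rpow_natCast, ← rpow_add two_pos, ← rpow_mul_natCast zero_le_two]
        ring_nf

end Distribution

theorem stmt_9_general {Ω α : Type*} [Fintype Ω] [Fintype α] (n : ℕ)
    (p : Ω → ℝ) (hp : ∀ ω, 0 ≤ p ω) (hp1 : ∑ ω, p ω = 1)
    (Y X : Ω → (Fin n → Bool)) (A : Ω → α)
    (zout : α → ℝ) (hz : ∀ a, zout a = 1 ∨ zout a = -1)
    (ga : ℝ)
    (hmin : avgMinEnt p Y A + avgMinEnt p X A ≥ n + 2 * ga)
    (hI : condMI p Y X A ≤ (2 : ℝ) ^ (-(2 * ga))) :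
    (∑ a, dst p A a *
        |(∑ ω, if A ω = a then p ω * chi (Y ω) (X ω) * zout a else 0) / dst p A a|) <
      (2 : ℝ) ^ (-ga + 2) := by
  have hbias : ∀ a, dst p A a *
      |(∑ ω, if A ω = a then p ω * chi (Y ω) (X ω) * zout a else 0) / dst p A a| ≤
      |∑ y, ∑ x, chi y x * dst p (fun ω => (Y ω, X ω, A ω)) (y, x, a)| := by
    intro a
    have hzout : |zout a| = 1 := by rcases hz a with h | h <;> simp [h]
    have hfactor : (∑ ω, if A ω = a then p ω * chi (Y ω) (X ω) * zout a else 0) =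
        zout a * ∑ y, ∑ x, chi y x * dst p (fun ω => (Y ω, X ω, A ω)) (y, x, a) := by
      rw [← sum_ite_mul_eq_sum_mul_dst, mul_sum]
      exact sum_congr rfl fun ω _ => by split_ifs <;> ring
    rw [hfactor]
    refine (mul_abs_div_le_abs _ _).trans_eq ?_
    rw [abs_mul, hzout, one_mul]
  have hI' : ∑ a, mutualInfoMass (fun y x => dst p (fun ω => (Y ω, X ω, A ω)) (y, x, a))
      (fun y => dst p (fun ω => (Y ω, A ω)) (y, a)) (fun x => dst p (fun ω => (X ω, A ω)) (x, a))
      (dst p A a) ≤ log 2 * (2 ^ (-ga)) ^ 2 := by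
    rw [← log_two_mul_condMI hp, ← rpow_mul_natCast zero_le_two]
    exact mul_le_mul_of_nonneg_left (hI.trans_eq (by congr 1; push_cast; ring))
      (log_nonneg one_le_two)
  calc _ ≤ _ := sum_le_sum fun a _ =>
        (hbias a).trans (hasMarginals_dst hp Y X A a).abs_sum_chi_mul_le
    _ < 4 * 2 ^ (-ga) := sum_sqrt_add_two_mul_sqrt_lt (by positivity) (by positivity)
        (fun a => sup'_dst_nonneg hp _ fun y => (y, a))
        (fun a => sup'_dst_nonneg hp _ fun x => (x, a)) (dst_nonneg_s9 hp A)
        (fun a => (hasMarginals_dst hp Y X A a).mutualInfoMass_nonneg)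
        (two_pow_mul_sum_sup'_mul_sum_sup'_le hp Y X A n ga hmin) (sum_dst_eq_one hp1 A) hI'
    _ = 2 ^ (-ga + 2) := by
        rw [rpow_add two_pos]
        norm_num
        ring

/-- Combinatorial lemma: if H̃∞(Y|A) + H̃∞(X|A) ≥ n + 2γ and I(Y;X|A) ≤ 2^{-2γ} (γ ≥ 3),
    then E_A[|E[χ_Y(X)·z_out | A=a]|] < 2^{-γ+2}.
    (The fixed conditioning Z = z is absorbed into the probability mass p.) -/
theorem stmt_9 {Ω α : Type*} [Fintype Ω] [Fintype α] (n : ℕ)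
    (p : Ω → ℝ) (hp : ∀ ω, 0 ≤ p ω) (hp1 : ∑ ω, p ω = 1)
    (Y X : Ω → (Fin n → Bool)) (A : Ω → α)
    (zout : α → ℝ) (hz : ∀ a, zout a = 1 ∨ zout a = -1)
    (ga : ℝ) (hga : 3 ≤ ga)
    (hmin : avgMinEnt p Y A + avgMinEnt p X A ≥ n + 2 * ga)
    (hI : condMI p Y X A ≤ (2 : ℝ) ^ (-(2 * ga))) :
    (∑ a, dst p A a *
        |(∑ ω, if A ω = a then p ω * chi (Y ω) (X ω) * zout a else 0) / dst p A a|) <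
      (2 : ℝ) ^ (-ga + 2) :=
  stmt_9_general n p hp hp1 Y X A zout hz ga hmin hI
end
end
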